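/- Let G be an abelian group and let f, g, h : G → ℂ be functions such that the function (x,y) ↦ f(x−y) − f(x)g(y) − g(x)f(y) − h(x)h(y) is bounded on G×G, and such that the odd parts f^o, g^o, and h^o are bounded functions on G. Then the function (x,y) ↦ f^e(x+y) − f^e(x)g^e(y) − g^e(x)f^e(y) − h^e(x)h^e(y) is bounded on G×G. -/

import Mathlib

/-!
Writing each function as the sum of its even and odd parts, the even defect at `(x, y)` is the
average of the given defect at `(x, -y)` and at `(-x, y)`, minus the three products of odd parts
`fᵒ(x) gᵒ(y)`, `gᵒ(x) fᵒ(y)`, `hᵒ(x) hᵒ(y)`; all of these are bounded.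
-/

/-- A complex-valued function on `G` is bounded. -/
def Bdd {G : Type*} (F : G → ℂ) : Prop := ∃ C : ℝ, ∀ x : G, ‖F x‖ ≤ C

namespace Bdd

variable {α β : Type*} {F K : α → ℂ}

lemma exists_nonneg_bound (hF : Bdd F) : ∃ C, 0 ≤ C ∧ ∀ x, ‖F x‖ ≤ C := by
  obtain ⟨C, hC⟩ := hF
  exact ⟨max C 0, le_max_right _ _, fun x => (hC x).trans (le_max_left _ _)⟩

lemma add (hF : Bdd F) (hK : Bdd K) : Bdd fun x => F x + K x := by
  obtain ⟨C, hC⟩ := hF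
  obtain ⟨D, hD⟩ := hK
  exact ⟨C + D, fun x => (norm_add_le _ _).trans (add_le_add (hC x) (hD x))⟩

lemma sub (hF : Bdd F) (hK : Bdd K) : Bdd fun x => F x - K x := by
  obtain ⟨C, hC⟩ := hF
  obtain ⟨D, hD⟩ := hK
  exact ⟨C + D, fun x => (norm_sub_le _ _).trans (add_le_add (hC x) (hD x))⟩

lemma mul (hF : Bdd F) (hK : Bdd K) : Bdd fun x => F x * K x := by
  obtain ⟨C, hC0, hC⟩ := hF.exists_nonneg_bound
  obtain ⟨D, -, hD⟩ := hK.exists_nonneg_bound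
  refine ⟨C * D, fun x => ?_⟩
  rw [norm_mul]
  exact mul_le_mul (hC x) (hD x) (norm_nonneg _) hC0

lemma div_const (hF : Bdd F) (c : ℂ) : Bdd fun x => F x / c := by
  obtain ⟨C, hC⟩ := hF
  refine ⟨C / ‖c‖, fun x => ?_⟩
  rw [norm_div]
  exact div_le_div_of_nonneg_right (hC x) (norm_nonneg c)

lemma comp (hF : Bdd F) (φ : β → α) : Bdd fun x => F (φ x) := by
  obtain ⟨C, hC⟩ := hF
  exact ⟨C, fun x => hC (φ x)⟩

lemma mul_prod {K : β → ℂ} (hF : Bdd F) (hK : Bdd K) : Bdd fun p : α × β => F p.1 * K p.2 :=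
  (hF.comp Prod.fst).mul (hK.comp Prod.snd)

end Bdd

section Parity

variable {G 𝕜 : Type*} [AddCommGroup G] [Field 𝕜]

def evenPart (f : G → 𝕜) (x : G) : 𝕜 := (f x + f (-x)) / 2

def oddPart (f : G → 𝕜) (x : G) : 𝕜 := (f x - f (-x)) / 2

def subtractionDefect (f g h : G → 𝕜) (x y : G) : 𝕜 :=
  f (x - y) - f x * g y - g x * f y - h x * h y

lemma evenPart_defect_eq (f g h : G → 𝕜) (x y : G) :
    evenPart f (x + y) - evenPart f x * evenPart g y - evenPart g x * evenPart f y
        - evenPart h x * evenPart h y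
      = (subtractionDefect f g h x (-y) + subtractionDefect f g h (-x) y) / 2
        - oddPart f x * oddPart g y - oddPart g x * oddPart f y - oddPart h x * oddPart h y := by
  have hxy : x - -y = x + y := sub_neg_eq_add x y
  have hyx : -x - y = -(x + y) := by abel
  -- In characteristic 2 every term carries a factor `1 / 2 = 0`.
  rcases eq_or_ne (2 : 𝕜) 0 with h2 | h2
  · simp only [evenPart, oddPart, subtractionDefect, h2, div_zero, mul_zero, sub_zero]
  · simp only [evenPart, oddPart, subtractionDefect, hxy, hyx]
    field_simp
    ring

end Parity

theorem stmt_15 {G : Type*} [AddCommGroup G]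
    (f g h : G → ℂ)
    (hbound : ∃ C : ℝ, ∀ x y : G,
      ‖f (x - y) - f x * g y - g x * f y - h x * h y‖ ≤ C)
    (hfo : Bdd (fun x : G => (f x - f (-x)) / 2))
    (hgo : Bdd (fun x : G => (g x - g (-x)) / 2))
    (hho : Bdd (fun x : G => (h x - h (-x)) / 2)) :
    ∃ C : ℝ, ∀ x y : G,
      ‖(f (x + y) + f (-(x + y))) / 2
        - (f x + f (-x)) / 2 * ((g y + g (-y)) / 2)
        - (g x + g (-x)) / 2 * ((f y + f (-y)) / 2)
        - (h x + h (-x)) / 2 * ((h y + h (-y)) / 2)‖ ≤ C := by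
  have hD : Bdd fun p : G × G => subtractionDefect f g h p.1 p.2 := by
    obtain ⟨C, hC⟩ := hbound
    exact ⟨C, fun p => hC p.1 p.2⟩
  have heven : Bdd fun p : G × G =>
      evenPart f (p.1 + p.2) - evenPart f p.1 * evenPart g p.2
        - evenPart g p.1 * evenPart f p.2 - evenPart h p.1 * evenPart h p.2 := by
    simp only [evenPart_defect_eq]
    have hD' := (hD.comp fun p : G × G => (p.1, -p.2)).add (hD.comp fun p : G × G => (-p.1, p.2))
    exact ((hD'.div_const 2).sub (hfo.mul_prod hgo)).sub (hgo.mul_prod hfo) |>.sub (hho.mul_prod hho)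
  obtain ⟨C, hC⟩ := heven
  exact ⟨C, fun x y => hC (x, y)⟩
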